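/- arXiv:2508.18838 — 2 statements merged into one kernel-verified Lean document; each statement's English description precedes it below -/
import Mathlib

section
/- Let d ≥ 1 and k ≥ 1, and let G = (V,D) be a graph with no isolated vertices whose edge set D is a k-fold R_d-circuit having at most two technicolour vertices. Then D is a balanced k-fold R_d-circuit. -/
open scoped BigOperators

/-- The row of the `d`-dimensional rigidity matrix of a realisation `p : V → ℝ^d`
indexed by the (unordered) edge `e`. -/
noncomputable def rigRow (d : ℕ) {V : Type*} [DecidableEq V]
    (p : V → Fin d → ℝ) (e : Sym2 V) : V × Fin d → ℝ :=
  Sym2.lift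
    ⟨fun u v wi =>
        (((if wi.1 = u then (1 : ℝ) else 0) - (if wi.1 = v then (1 : ℝ) else 0)) *
          (p u wi.2 - p v wi.2)),
      fun u v => by funext wi; ring⟩ e

/-- A realisation is generic if the coordinates of the points form an algebraically
independent set over `ℚ`. -/
def Generic (d : ℕ) {V : Type*} (p : V → Fin d → ℝ) : Prop :=
  AlgebraicIndependent ℚ fun vi : V × Fin d => p vi.1 vi.2

/-- `rrk d p F` : the rank of the set of rows of the rigidity matrix of `(K_V, p)`
indexed by the edges in `F`.  For generic `p` this is the rank function `r_d` of
the generic `d`-dimensional rigidity matroid. -/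
noncomputable def rrk (d : ℕ) {V : Type*} [Fintype V] [DecidableEq V]
    (p : V → Fin d → ℝ) (F : Set (Sym2 V)) : ℕ :=
  Module.finrank ℝ (Submodule.span ℝ (rigRow d p '' F))

/-- `D` is a `k`-fold circuit (with respect to the realisation `p`) :
`r (D \ {f}) = r D` for every `f ∈ D`, and `r D = |D| - k`. -/
def IsKFoldCircuit (d : ℕ) {V : Type*} [Fintype V] [DecidableEq V]
    (p : V → Fin d → ℝ) (D : Finset (Sym2 V)) (k : ℕ) : Prop :=
  (∀ f ∈ D, rrk d p (↑D \ {f}) = rrk d p ↑D) ∧ rrk d p ↑D + k = D.card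

/-- An `R_d`-circuit: `r C = |C| - 1` and `r (C \ {f}) = r C` for all `f ∈ C`. -/
def IsCircuit (d : ℕ) {V : Type*} [Fintype V] [DecidableEq V]
    (p : V → Fin d → ℝ) (C : Finset (Sym2 V)) : Prop :=
  IsKFoldCircuit d p C 1

/-- `A` is a part of the principal partition of the `k`-fold circuit `D`:
the parts are the sets `D \ B` where `B` runs over the `(k-1)`-fold circuits
contained in `D`. -/
def IsPrincipalPart (d : ℕ) {V : Type*} [Fintype V] [DecidableEq V]
    (p : V → Fin d → ℝ) (D : Finset (Sym2 V)) (k : ℕ) (A : Finset (Sym2 V)) : Prop :=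
  ∃ B ⊆ D, IsKFoldCircuit d p B (k - 1) ∧ A = D \ B

/-- Closure in the rigidity matroid: all edges of `K_V` whose addition to `F`
does not increase the rank. -/
def rcl (d : ℕ) {V : Type*} [Fintype V] [DecidableEq V]
    (p : V → Fin d → ℝ) (F : Set (Sym2 V)) : Set (Sym2 V) :=
  {e | ¬ e.IsDiag ∧ rrk d p (insert e F) = rrk d p F}

/-- A `k`-fold circuit `D` with principal partition `A_1, …, A_ℓ` is balanced if
`r_d (⋂ i, cl_d (D \ A_i)) = ℓ - k`. -/
def IsBalanced (d : ℕ) {V : Type*} [Fintype V] [DecidableEq V]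
    (p : V → Fin d → ℝ) (D : Finset (Sym2 V)) (k : ℕ) : Prop :=
  rrk d p (⋂ A ∈ {A | IsPrincipalPart d p D k A}, rcl d p ↑(D \ A)) + k =
    Set.ncard {A | IsPrincipalPart d p D k A}

/-- A vertex is monochromatic if all edges of `D` incident with it lie in a single
part of the principal partition (and technicolour otherwise). -/
def Monochromatic (d : ℕ) {V : Type*} [Fintype V] [DecidableEq V]
    (p : V → Fin d → ℝ) (D : Finset (Sym2 V)) (k : ℕ) (w : V) : Prop :=
  ∃ A, IsPrincipalPart d p D k A ∧ ∀ e ∈ D, w ∈ e → e ∈ A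

/-- The graph `(W, E)` is `R_d`-rigid: it is a complete graph on at most `d+1`
vertices, or `r_d(E) = d|W| - (d+1 choose 2)`. -/
def IsRigidOn (d : ℕ) {V : Type*} [Fintype V] [DecidableEq V]
    (p : V → Fin d → ℝ) (W : Finset V) (E : Finset (Sym2 V)) : Prop :=
  (W.card ≤ d + 1 ∧ ∀ u ∈ W, ∀ w ∈ W, u ≠ w → s(u, w) ∈ E) ∨
    (rrk d p ↑E : ℤ) + ((d + 1).choose 2 : ℤ) = (d : ℤ) * (W.card : ℤ)

/-- The edge set of the cone of (the graph with edge set) `D` over a new vertex,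
realised as `none : Option V`. -/
def coneEdges {V : Type*} [Fintype V] [DecidableEq V] (D : Finset (Sym2 V)) :
    Finset (Sym2 (Option V)) :=
  D.image (Sym2.map Option.some) ∪
    Finset.univ.image fun u : V => s((Option.some u : Option V), (none : Option V))

/-- The degree of the vertex `w` in the edge set `D`. -/
def degIn {V : Type*} [Fintype V] [DecidableEq V] (D : Finset (Sym2 V)) (w : V) : ℕ :=
  (D.filter fun e => w ∈ e).card

/-- The set of vertices incident with an edge of `F`. -/
def esupp {V : Type*} [Fintype V] [DecidableEq V] (F : Finset (Sym2 V)) : Finset V :=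
  Finset.univ.filter fun w => ∃ e ∈ F, w ∈ e

/-!
Let `B₁, …, B_ℓ` be the `(k-1)`-fold circuits contained in `D` (so the parts are the `D \ Bᵢ`)
and `W = ⋂ span Bᵢ`; then `⋂ cl(D \ Aᵢ)` is the set of edges whose rows lie in `W`. Nullity of
edge sets is supermodular and the dimension of subspaces is modular, so intersecting the `Bᵢ`
one at a time gives `k ≤ ℓ` (because `⋂ Bᵢ = ∅`) and `ℓ - k ≤ dim W` (because the parts are
disjoint). A vector of `W` vanishes at every monochromatic vertex and is orthogonal to the
translations and rotations; supported on the at most two technicolour vertices `u, v`, it is a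
multiple of the row of `uv`. So `dim W ≤ 1`, and if `W ≠ 0` the row of `uv` lies in every
`span Bᵢ`; the nullity count for the sets `Bᵢ + uv` then gives `ℓ ≥ k + 1`. In both cases
`r(⋂ cl(D \ Aᵢ)) = dim W = ℓ - k`.
-/

open Finset Function

theorem Finset.sum_le_inf'_add_of_supermodular {α ι : Type*} [Lattice α] {g : α → ℤ}
    (hg : Monotone g) (hsup : ∀ a b, g a + g b ≤ g (a ⊔ b) + g (a ⊓ b))
    {s : Finset ι} (hs : s.Nonempty) {x : ι → α} {m : α} (hm : ∀ i ∈ s, x i ≤ m) :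
    ∑ i ∈ s, g (x i) ≤ g (s.inf' hs x) + (#s - 1) * g m := by
  induction hs using Finset.Nonempty.cons_induction with
  | singleton i => simp
  | cons i s hi hs ih =>
    have ih := ih fun j hj => hm j (mem_cons_of_mem hj)
    obtain ⟨j, hj⟩ := hs
    have hsupm : x i ⊔ s.inf' ⟨j, hj⟩ x ≤ m :=
      sup_le (hm i (mem_cons_self i s)) ((inf'_le x hj).trans (hm j (mem_cons_of_mem hj)))
    have := hsup (x i) (s.inf' ⟨j, hj⟩ x)
    have := hg hsupm
    rw [sum_cons, inf'_cons ⟨j, hj⟩, card_cons]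
    push_cast
    linarith

theorem Submodule.mem_and_ne_zero_of_le_span_singleton {K M : Type*} [DivisionRing K]
    [AddCommGroup M] [Module K M] {W : Submodule K M} {x : M} (h : W ≤ K ∙ x) (hW : W ≠ ⊥) :
    x ∈ W ∧ x ≠ 0 := by
  obtain ⟨w, hw, hw0⟩ := W.ne_bot_iff.1 hW
  obtain ⟨c, rfl⟩ := mem_span_singleton.1 (h hw)
  have hc : c ≠ 0 := by rintro rfl; simp at hw0
  exact ⟨by simpa [smul_smul, inv_mul_cancel₀ hc] using W.smul_mem c⁻¹ hw,
    by rintro rfl; simp at hw0⟩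

theorem Set.exists_subset_pair_of_ncard_le_two {α : Type*} [Nonempty α] {s : Set α}
    (hs : s.Finite) (h : s.ncard ≤ 2) : ∃ a b, s ⊆ {a, b} := by
  interval_cases hn : s.ncard
  · rw [Set.ncard_eq_zero hs] at hn
    exact ⟨Classical.arbitrary α, Classical.arbitrary α, by simp [hn]⟩
  · obtain ⟨a, rfl⟩ := Set.ncard_eq_one.1 hn
    exact ⟨a, a, by simp⟩
  · obtain ⟨a, b, -, rfl⟩ := Set.ncard_eq_two.1 hn
    exact ⟨a, b, subset_rfl⟩

section RigidityMatroid

variable {d : ℕ} {V : Type*} [DecidableEq V] {p : V → Fin d → ℝ}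

noncomputable def rowSpan (d : ℕ) (p : V → Fin d → ℝ) (F : Set (Sym2 V)) :
    Submodule ℝ (V × Fin d → ℝ) :=
  Submodule.span ℝ (rigRow d p '' F)

lemma rigRow_mk (u v : V) (x : V) (i : Fin d) :
    rigRow d p s(u, v) (x, i) =
      ((if x = u then 1 else 0) - (if x = v then 1 else 0)) * (p u i - p v i) := rfl

lemma rigRow_of_isDiag {e : Sym2 V} (he : e.IsDiag) : rigRow d p e = 0 := by
  induction e using Sym2.ind with
  | _ u v =>
    obtain rfl := Sym2.mk_isDiag_iff.1 he
    funext ⟨x, i⟩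
    simp [rigRow_mk]

lemma rigRow_mem_rowSpan {e : Sym2 V} {F : Set (Sym2 V)} (he : e ∈ F) :
    rigRow d p e ∈ rowSpan d p F :=
  Submodule.subset_span ⟨e, he, rfl⟩

lemma rowSpan_mono {F G : Set (Sym2 V)} (h : F ⊆ G) : rowSpan d p F ≤ rowSpan d p G :=
  Submodule.span_mono (Set.image_mono h)

lemma rowSpan_union (F G : Set (Sym2 V)) :
    rowSpan d p (F ∪ G) = rowSpan d p F ⊔ rowSpan d p G := by
  rw [rowSpan, Set.image_union, Submodule.span_union, rowSpan, rowSpan]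

lemma rowSpan_setOf_rigRow_mem {W : Submodule ℝ (V × Fin d → ℝ)} {e₀ : Sym2 V}
    (hW : W ≤ ℝ ∙ rigRow d p e₀) : rowSpan d p {e | ¬ e.IsDiag ∧ rigRow d p e ∈ W} = W := by
  refine le_antisymm (Submodule.span_le.2 ?_) ?_
  · rintro _ ⟨e, ⟨-, he⟩, rfl⟩
    exact he
  rcases eq_or_ne W ⊥ with rfl | hne
  · exact bot_le
  obtain ⟨hmem, hrow⟩ := Submodule.mem_and_ne_zero_of_le_span_singleton hW hne
  refine hW.trans ((Submodule.span_singleton_le_iff_mem _ _).2 (rigRow_mem_rowSpan ?_))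
  exact ⟨fun hdiag => hrow (rigRow_of_isDiag hdiag), hmem⟩

variable [Fintype V]

lemma rrk_eq_finrank_rowSpan (F : Set (Sym2 V)) :
    rrk d p F = Module.finrank ℝ (rowSpan d p F) := rfl

lemma rrk_mono {F G : Set (Sym2 V)} (h : F ⊆ G) : rrk d p F ≤ rrk d p G :=
  Submodule.finrank_mono (rowSpan_mono h)

lemma rrk_insert_eq_iff {e : Sym2 V} {F : Set (Sym2 V)} :
    rrk d p (insert e F) = rrk d p F ↔ rigRow d p e ∈ rowSpan d p F := by
  rw [rrk_eq_finrank_rowSpan, rrk_eq_finrank_rowSpan]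
  constructor
  · intro h
    rw [Submodule.eq_of_le_of_finrank_eq (rowSpan_mono (Set.subset_insert e F)) h.symm]
    exact rigRow_mem_rowSpan (Set.mem_insert e F)
  · intro h
    rw [Set.insert_eq, rowSpan_union,
      sup_eq_right.2 (Submodule.span_le.2 (by simpa [Set.image_singleton] using h))]

lemma mem_rcl_iff {e : Sym2 V} {F : Set (Sym2 V)} :
    e ∈ rcl d p F ↔ ¬ e.IsDiag ∧ rigRow d p e ∈ rowSpan d p F :=
  and_congr Iff.rfl rrk_insert_eq_iff

lemma rrk_le_rrk_add_card_sdiff {X Y : Finset (Sym2 V)} (h : X ⊆ Y) :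
    rrk d p ↑Y ≤ rrk d p ↑X + #(Y \ X) := by
  have hY : (Y : Set (Sym2 V)) = ↑X ∪ ↑(Y \ X) := by
    rw [← coe_union, union_sdiff_of_subset h]
  rw [rrk_eq_finrank_rowSpan, hY, rowSpan_union]
  refine (Submodule.finrank_add_le_finrank_add_finrank _ _).trans (Nat.add_le_add_left ?_ _)
  rw [rowSpan, ← coe_image]
  exact (finrank_span_finset_le_card _).trans card_image_le

lemma rrk_union_add_rrk_inter_le (X Y : Finset (Sym2 V)) :
    rrk d p ↑(X ∪ Y) + rrk d p ↑(X ∩ Y) ≤ rrk d p ↑X + rrk d p ↑Y := by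
  have hinter : rrk d p ↑(X ∩ Y) ≤ Module.finrank ℝ ↥(rowSpan d p ↑X ⊓ rowSpan d p ↑Y) :=
    Submodule.finrank_mono (le_inf (rowSpan_mono (by simp)) (rowSpan_mono (by simp)))
  have := Submodule.finrank_sup_add_finrank_inf_eq (rowSpan d p ↑X) (rowSpan d p ↑Y)
  rw [rrk_eq_finrank_rowSpan, coe_union, rowSpan_union]
  simp only [rrk_eq_finrank_rowSpan] at hinter ⊢
  omega

noncomputable def nullity (d : ℕ) (p : V → Fin d → ℝ) (X : Finset (Sym2 V)) : ℤ :=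
  #X - rrk d p ↑X

@[simp]
lemma nullity_empty : nullity d p ∅ = 0 := by
  rw [nullity, card_empty, coe_empty, rrk_eq_finrank_rowSpan, rowSpan, Set.image_empty,
    Submodule.span_empty, finrank_bot]
  rfl

lemma nullity_mono : Monotone (nullity d p) := by
  intro X Y h
  have := rrk_le_rrk_add_card_sdiff (p := p) h
  have := card_sdiff_add_card_eq_card h
  simp only [nullity]
  omega

lemma nullity_add_nullity_le (X Y : Finset (Sym2 V)) :
    nullity d p X + nullity d p Y ≤ nullity d p (X ∪ Y) + nullity d p (X ∩ Y) := by
  have := rrk_union_add_rrk_inter_le (p := p) X Y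
  have := card_union_add_card_inter X Y
  simp only [nullity]
  omega

lemma nullity_insert_of_mem_rowSpan {e : Sym2 V} {X : Finset (Sym2 V)} (he : e ∉ X)
    (h : rigRow d p e ∈ rowSpan d p ↑X) : nullity d p (insert e X) = nullity d p X + 1 := by
  have hrk : rrk d p ↑(insert e X) = rrk d p ↑X := by
    rw [coe_insert, rrk_insert_eq_iff.2 h]
  simp only [nullity, hrk, card_insert_of_notMem he]
  push_cast
  ring

lemma nullity_singleton {e : Sym2 V} (h : rigRow d p e ≠ 0) : nullity d p {e} = 0 := by
  rw [nullity, coe_singleton, rrk_eq_finrank_rowSpan, rowSpan, Set.image_singleton,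
    finrank_span_singleton h, card_singleton]
  rfl

lemma sum_nullity_le_nullity_inf' {ι : Type*} {s : Finset ι} (hs : s.Nonempty)
    {x : ι → Finset (Sym2 V)} {M : Finset (Sym2 V)} (hM : ∀ i ∈ s, x i ⊆ M) :
    ∑ i ∈ s, nullity d p (x i) ≤ nullity d p (s.inf' hs x) + (#s - 1) * nullity d p M :=
  sum_le_inf'_add_of_supermodular nullity_mono nullity_add_nullity_le hs hM

lemma sum_rrk_le_finrank_iInf {ι : Type*} {s : Finset ι} (hs : s.Nonempty)
    {x : ι → Finset (Sym2 V)} {M : Finset (Sym2 V)} (hM : ∀ i ∈ s, x i ⊆ M) :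
    ∑ i ∈ s, (rrk d p ↑(x i) : ℤ) ≤
      Module.finrank ℝ ↥(⨅ i ∈ s, rowSpan d p ↑(x i)) + (#s - 1) * rrk d p ↑M := by
  have key := sum_le_inf'_add_of_supermodular (g := fun W : Submodule ℝ (V × Fin d → ℝ) =>
      (Module.finrank ℝ W : ℤ)) (fun W W' h => Nat.cast_le.2 (Submodule.finrank_mono h))
    (fun W W' => by exact_mod_cast (Submodule.finrank_sup_add_finrank_inf_eq W W').ge) hs
    (x := fun i => rowSpan d p ↑(x i)) fun i hi => rowSpan_mono (coe_subset.2 (hM i hi))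
  rwa [inf'_eq_inf, Finset.inf_eq_iInf] at key

def NoColoops (d : ℕ) (p : V → Fin d → ℝ) (X : Finset (Sym2 V)) : Prop :=
  ∀ f ∈ X, rrk d p (↑X \ {f}) = rrk d p ↑X

lemma isKFoldCircuit_iff {D : Finset (Sym2 V)} {k : ℕ} :
    IsKFoldCircuit d p D k ↔ NoColoops d p D ∧ nullity d p D = k := by
  simp only [IsKFoldCircuit, NoColoops, nullity]
  exact and_congr Iff.rfl (by omega)

lemma NoColoops.rigRow_mem_rowSpan_erase {X : Finset (Sym2 V)} (hX : NoColoops d p X)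
    {f : Sym2 V} (hf : f ∈ X) : rigRow d p f ∈ rowSpan d p ↑(X.erase f) := by
  rw [← rrk_insert_eq_iff, coe_erase, Set.insert_sdiff_singleton, Set.insert_eq_of_mem hf]
  exact (hX f hf).symm

lemma exists_subset_noColoops_nullity_eq (X : Finset (Sym2 V)) :
    ∃ B ⊆ X, NoColoops d p B ∧ nullity d p B = nullity d p X := by
  induction X using Finset.strongInduction with
  | _ X ih =>
    by_cases hX : NoColoops d p X
    · exact ⟨X, subset_rfl, hX, rfl⟩
    obtain ⟨f, hf, hcoloop⟩ : ∃ f ∈ X, rrk d p ↑(X.erase f) ≠ rrk d p ↑X := by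
      simpa [NoColoops, coe_erase] using hX
    obtain ⟨B, hBX, hB, hnB⟩ := ih _ (erase_ssubset hf)
    refine ⟨B, hBX.trans (erase_subset f X), hB, hnB.trans ?_⟩
    -- a coloop raises the rank and the size by one each
    have hle := rrk_le_rrk_add_card_sdiff (p := p) (erase_subset f X)
    have hge := rrk_mono (p := p) (coe_subset.2 (erase_subset f X))
    rw [sdiff_erase_self hf, card_singleton] at hle
    have := card_erase_add_one hf
    simp only [nullity]
    omega

lemma NoColoops.subset_of_nullity_union_le {C X : Finset (Sym2 V)} (hC : NoColoops d p C)
    (h : nullity d p (X ∪ C) ≤ nullity d p X) : C ⊆ X := by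
  intro f hfC
  by_contra hfX
  have hXY : X ⊆ (X ∪ C).erase f := fun x hx =>
    mem_erase.2 ⟨fun hxf => hfX (hxf ▸ hx), mem_union_left C hx⟩
  have hrow : rigRow d p f ∈ rowSpan d p ↑((X ∪ C).erase f) :=
    rowSpan_mono (coe_subset.2 (erase_subset_erase f subset_union_right))
      (hC.rigRow_mem_rowSpan_erase hfC)
  have := nullity_insert_of_mem_rowSpan (notMem_erase f _) hrow
  rw [insert_erase (mem_union_right X hfC)] at this
  have := nullity_mono (p := p) hXY
  omega

lemma NoColoops.union_eq {D B B' : Finset (Sym2 V)} (hD : NoColoops d p D)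
    (hB' : NoColoops d p B') (hBD : B ⊆ D) (hB'D : B' ⊆ D)
    (hnB : nullity d p B + 1 = nullity d p D) (hB'B : ¬ B' ⊆ B) : B ∪ B' = D := by
  have hlt : nullity d p B < nullity d p (B ∪ B') :=
    lt_of_not_ge fun h => hB'B (hB'.subset_of_nullity_union_le h)
  have hle := nullity_mono (p := p) (union_subset hBD hB'D)
  refine (union_subset hBD hB'D).antisymm (hD.subset_of_nullity_union_le ?_)
  rw [union_eq_right.2 (union_subset hBD hB'D)]
  omega

end RigidityMatroid

section PrincipalPartition

variable {d : ℕ} {V : Type*} [Fintype V] [DecidableEq V] {p : V → Fin d → ℝ}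
  {D B B' : Finset (Sym2 V)} {k : ℕ}

open Classical in
noncomputable def predFoldCircuits (d : ℕ) (p : V → Fin d → ℝ) (D : Finset (Sym2 V)) (k : ℕ) :
    Finset (Finset (Sym2 V)) :=
  D.powerset.filter fun B => IsKFoldCircuit d p B (k - 1)

lemma mem_predFoldCircuits :
    B ∈ predFoldCircuits d p D k ↔ B ⊆ D ∧ IsKFoldCircuit d p B (k - 1) := by
  simp [predFoldCircuits]

lemma nullity_of_mem_predFoldCircuits (hk : 1 ≤ k) (hB : B ∈ predFoldCircuits d p D k) :
    nullity d p B = k - 1 := by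
  rw [(isKFoldCircuit_iff.1 (mem_predFoldCircuits.1 hB).2).2]
  omega

noncomputable def commonSpan (d : ℕ) (p : V → Fin d → ℝ) (D : Finset (Sym2 V)) (k : ℕ) :
    Submodule ℝ (V × Fin d → ℝ) :=
  ⨅ B ∈ predFoldCircuits d p D k, rowSpan d p ↑B

lemma mem_commonSpan {w : V × Fin d → ℝ} :
    w ∈ commonSpan d p D k ↔ ∀ B ∈ predFoldCircuits d p D k, w ∈ rowSpan d p ↑B := by
  simp [commonSpan, Submodule.mem_iInf]

namespace IsKFoldCircuit

variable (hD : IsKFoldCircuit d p D k) (hk : 1 ≤ k)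
include hD hk

lemma nonempty : D.Nonempty := by
  rw [← card_pos]
  have := hD.2
  omega

lemma exists_mem_predFoldCircuits_notMem {e : Sym2 V} (he : e ∈ D) :
    ∃ B ∈ predFoldCircuits d p D k, e ∉ B := by
  obtain ⟨hDc, hDn⟩ := isKFoldCircuit_iff.1 hD
  obtain ⟨B, hB, hBc, hBn⟩ := exists_subset_noColoops_nullity_eq (p := p) (D.erase e)
  have hrk : rrk d p ↑(D.erase e) = rrk d p ↑D := by rw [coe_erase]; exact hDc e he
  have hn : nullity d p B = ((k - 1 : ℕ) : ℤ) := by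
    have := card_erase_add_one he
    rw [hBn, nullity, hrk]
    simp only [nullity] at hDn
    omega
  exact ⟨B, mem_predFoldCircuits.2 ⟨hB.trans (erase_subset e D), isKFoldCircuit_iff.2 ⟨hBc, hn⟩⟩,
    fun heB => (mem_erase.1 (hB heB)).1 rfl⟩

lemma predFoldCircuits_nonempty : (predFoldCircuits d p D k).Nonempty := by
  obtain ⟨e, he⟩ := hD.nonempty hk
  obtain ⟨B, hB, -⟩ := hD.exists_mem_predFoldCircuits_notMem hk he
  exact ⟨B, hB⟩

lemma inf'_predFoldCircuits_eq_empty :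
    (predFoldCircuits d p D k).inf' (hD.predFoldCircuits_nonempty hk) id = ∅ := by
  refine eq_empty_of_forall_notMem fun e he => ?_
  rw [mem_inf'] at he
  obtain ⟨B₀, hB₀⟩ := hD.predFoldCircuits_nonempty hk
  obtain ⟨B, hB, heB⟩ := hD.exists_mem_predFoldCircuits_notMem hk
    ((mem_predFoldCircuits.1 hB₀).1 (he B₀ hB₀))
  exact heB (he B hB)

lemma inf'_insert_predFoldCircuits_subset (e : Sym2 V) :
    (predFoldCircuits d p D k).inf' (hD.predFoldCircuits_nonempty hk) (insert e) ⊆ {e} := by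
  intro x hx
  rw [mem_inf'] at hx
  by_contra hxe
  have hxB : x ∈ (predFoldCircuits d p D k).inf' (hD.predFoldCircuits_nonempty hk) id :=
    (mem_inf' _).2 fun B hB => (mem_insert.1 (hx B hB)).resolve_left (by simpa using hxe)
  rw [hD.inf'_predFoldCircuits_eq_empty hk] at hxB
  exact notMem_empty x hxB

lemma union_eq_of_mem_predFoldCircuits (hB : B ∈ predFoldCircuits d p D k)
    (hB' : B' ∈ predFoldCircuits d p D k) (hne : B ≠ B') : B ∪ B' = D := by
  obtain ⟨hBD, hBc⟩ := mem_predFoldCircuits.1 hB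
  obtain ⟨hB'D, hB'c⟩ := mem_predFoldCircuits.1 hB'
  have hDc := (isKFoldCircuit_iff.1 hD).1
  have hnD := (isKFoldCircuit_iff.1 hD).2
  have hnB := nullity_of_mem_predFoldCircuits hk hB
  have hnB' := nullity_of_mem_predFoldCircuits hk hB'
  by_cases hB'B : B' ⊆ B
  · rw [union_comm]
    exact hDc.union_eq (isKFoldCircuit_iff.1 hBc).1 hB'D hBD (by omega)
      fun hBB' => hne (hBB'.antisymm hB'B)
  · exact hDc.union_eq (isKFoldCircuit_iff.1 hB'c).1 hBD hB'D (by omega) hB'B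

lemma sum_card_sdiff_le : ∑ B ∈ predFoldCircuits d p D k, #(D \ B) ≤ #D := by
  rw [← card_biUnion]
  · exact card_le_card (biUnion_subset.2 fun B _ => sdiff_subset)
  · intro B hB B' hB' hne
    refine disjoint_left.2 fun e heB heB' => ?_
    have := hD.union_eq_of_mem_predFoldCircuits hk hB hB' hne
    rw [mem_sdiff] at heB heB'
    exact (mem_union.1 (this ▸ heB.1)).elim heB.2 heB'.2

lemma le_card_predFoldCircuits : k ≤ #(predFoldCircuits d p D k) := by
  have key := sum_nullity_le_nullity_inf' (p := p) (hD.predFoldCircuits_nonempty hk) (x := id)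
    fun B hB => (mem_predFoldCircuits.1 hB).1
  rw [hD.inf'_predFoldCircuits_eq_empty hk] at key
  simp only [id] at key
  rw [nullity_empty, (isKFoldCircuit_iff.1 hD).2,
    sum_congr rfl fun B hB => nullity_of_mem_predFoldCircuits hk hB, sum_const,
    nsmul_eq_mul] at key
  zify
  linarith

lemma card_predFoldCircuits_le :
    #(predFoldCircuits d p D k) ≤ Module.finrank ℝ (commonSpan d p D k) + k := by
  have key := sum_rrk_le_finrank_iInf (p := p) (hD.predFoldCircuits_nonempty hk) (x := id)
    fun B hB => (mem_predFoldCircuits.1 hB).1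
  have hrkB : ∀ B ∈ predFoldCircuits d p D k,
      (rrk d p ↑(id B) : ℤ) = #D - #(D \ B) - (k - 1) := by
    intro B hB
    have := nullity_of_mem_predFoldCircuits hk hB
    have := card_sdiff_add_card_eq_card (mem_predFoldCircuits.1 hB).1
    simp only [nullity, id] at *
    omega
  have hrkD : (rrk d p ↑D : ℤ) = #D - k := by
    have := hD.2
    omega
  have hsum : ∑ B ∈ predFoldCircuits d p D k, (#(D \ B) : ℤ) ≤ #D := by
    exact_mod_cast hD.sum_card_sdiff_le hk
  rw [sum_congr rfl hrkB, hrkD] at key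
  simp only [sum_sub_distrib, sum_const, nsmul_eq_mul] at key
  change _ ≤ (Module.finrank ℝ (commonSpan d p D k) : ℤ) + _ at key
  zify
  linarith

lemma lt_card_predFoldCircuits {e : Sym2 V} (he : rigRow d p e ≠ 0)
    (heW : rigRow d p e ∈ commonSpan d p D k) : k < #(predFoldCircuits d p D k) := by
  set P := predFoldCircuits d p D k
  have hPne := hD.predFoldCircuits_nonempty hk
  have hPD : ∀ B ∈ P, B ⊆ D := fun B hB => (mem_predFoldCircuits.1 hB).1
  have key := sum_nullity_le_nullity_inf' (p := p) hPne (x := insert e) (M := insert e D)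
    fun B hB => insert_subset_insert e (hPD B hB)
  have hinf : nullity d p (P.inf' hPne (insert e)) ≤ 0 :=
    (nullity_mono (hD.inf'_insert_predFoldCircuits_subset hk e)).trans (nullity_singleton he).le
  have hnB : ∀ B ∈ P, e ∉ B → nullity d p (insert e B) = k := fun B hB heB => by
    rw [nullity_insert_of_mem_rowSpan heB (mem_commonSpan.1 heW B hB),
      nullity_of_mem_predFoldCircuits hk hB]
    ring
  by_cases heD : e ∈ D
  · obtain ⟨B₀, hB₀, heB₀⟩ := hD.exists_mem_predFoldCircuits_notMem hk heD
    have hlow := card_nsmul_le_sum (P.erase B₀) (fun B => nullity d p (insert e B)) (k - 1)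
      fun B hB => (nullity_of_mem_predFoldCircuits hk (mem_of_mem_erase hB)).symm.le.trans
        (nullity_mono (subset_insert e B))
    rw [← add_sum_erase P _ hB₀, hnB B₀ hB₀ heB₀, insert_eq_of_mem heD,
      (isKFoldCircuit_iff.1 hD).2] at key
    have hc : (#(P.erase B₀) : ℤ) + 1 = #P := by exact_mod_cast card_erase_add_one hB₀
    rw [nsmul_eq_mul] at hlow
    zify
    nlinarith
  · obtain ⟨B₀, hB₀⟩ := hPne
    have hnD : nullity d p (insert e D) = k + 1 := by
      rw [nullity_insert_of_mem_rowSpan heD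
        (rowSpan_mono (coe_subset.2 (hPD B₀ hB₀)) (mem_commonSpan.1 heW B₀ hB₀)),
        (isKFoldCircuit_iff.1 hD).2]
    rw [sum_congr rfl fun B hB => hnB B hB fun heB => heD (hPD B hB heB), sum_const,
      nsmul_eq_mul, hnD] at key
    zify
    linarith

end IsKFoldCircuit

end PrincipalPartition

section TrivialMotions

variable {d : ℕ} {V : Type*} [DecidableEq V] {p : V → Fin d → ℝ} {F : Set (Sym2 V)}
  {w : V × Fin d → ℝ}

lemma apply_eq_zero_of_mem_rowSpan {x : V} (hx : ∀ e ∈ F, x ∉ e) (hw : w ∈ rowSpan d p F)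
    (i : Fin d) : w (x, i) = 0 := by
  induction hw using Submodule.span_induction with
  | mem _ h =>
    obtain ⟨e, he, rfl⟩ := h
    induction e using Sym2.ind with
    | _ u v =>
      obtain ⟨hxu, hxv⟩ := not_or.1 (Sym2.mem_iff.not.1 (hx _ he))
      simp [rigRow_mk, hxu, hxv]
  | zero => rfl
  | add _ _ _ _ h₁ h₂ => simp [h₁, h₂]
  | smul a _ _ h => simp [h]

variable [Fintype V]

lemma sum_apply_eq_zero_of_mem_rowSpan (hw : w ∈ rowSpan d p F) (i : Fin d) :
    ∑ x, w (x, i) = 0 := by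
  induction hw using Submodule.span_induction with
  | mem _ h =>
    obtain ⟨e, -, rfl⟩ := h
    induction e using Sym2.ind with
    | _ u v => simp [rigRow_mk, sub_mul, sum_sub_distrib]
  | zero => simp
  | add _ _ _ _ h₁ h₂ => simp [sum_add_distrib, h₁, h₂]
  | smul a _ _ h => simp [← mul_sum, h]

lemma sum_mul_sub_mul_eq_zero_of_mem_rowSpan (hw : w ∈ rowSpan d p F) (i j : Fin d) :
    ∑ x, (p x j * w (x, i) - p x i * w (x, j)) = 0 := by
  induction hw using Submodule.span_induction with
  | mem _ h =>
    obtain ⟨e, -, rfl⟩ := h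
    induction e using Sym2.ind with
    | _ u v =>
      simp only [rigRow_mk, sub_mul, mul_sub, ite_mul, one_mul, zero_mul, mul_ite, mul_zero,
        sum_sub_distrib, sum_ite_eq', mem_univ, if_true]
      ring
  | zero => simp
  | add _ _ _ _ h₁ h₂ =>
    simp only [Pi.add_apply, mul_add, add_sub_add_comm, sum_add_distrib, h₁, h₂, add_zero]
  | smul a _ _ h =>
    simp only [Pi.smul_apply, smul_eq_mul, mul_left_comm _ a, ← mul_sub, ← mul_sum, h, mul_zero]

lemma mem_span_rigRow_of_forall_apply_eq_zero (hp : Injective p) {u v : V}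
    (hsupp : ∀ x, x ≠ u → x ≠ v → ∀ i, w (x, i) = 0)
    (htrans : ∀ i, ∑ x, w (x, i) = 0)
    (hrot : ∀ i j, ∑ x, (p x j * w (x, i) - p x i * w (x, j)) = 0) :
    w ∈ ℝ ∙ rigRow d p s(u, v) := by
  rcases eq_or_ne u v with rfl | huv
  · have hw : w = 0 := by
      funext ⟨x, i⟩
      by_cases hx : x = u
      · subst hx
        simpa [Fintype.sum_eq_single x fun y hy => hsupp y hy hy i] using htrans i
      · exact hsupp x hx hx i
    simp [hw]
  have hv : ∀ i, w (v, i) = -w (u, i) := fun i => by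
    have := htrans i
    rw [Fintype.sum_eq_add u v huv fun x hx => hsupp x hx.1 hx.2 i] at this
    linarith
  obtain ⟨i₀, hi₀⟩ := Function.ne_iff.1 (hp.ne huv)
  have hq : p u i₀ - p v i₀ ≠ 0 := sub_ne_zero.2 hi₀
  -- the rotation in the plane of `i₀, j` forces `w u` to be parallel to `p u - p v`
  have hu : ∀ j, w (u, j) * (p u i₀ - p v i₀) = w (u, i₀) * (p u j - p v j) := fun j => by
    have := hrot i₀ j
    rw [Fintype.sum_eq_add u v huv fun x hx => by simp [hsupp x hx.1 hx.2], hv, hv] at this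
    linarith
  refine Submodule.mem_span_singleton.2 ⟨w (u, i₀) / (p u i₀ - p v i₀), ?_⟩
  funext ⟨x, i⟩
  rw [Pi.smul_apply, smul_eq_mul, rigRow_mk]
  by_cases hxu : x = u
  · subst hxu
    field_simp
    simp only [if_true, huv, if_false]
    linarith [hu i]
  · by_cases hxv : x = v
    · subst hxv
      field_simp
      simp only [hxu, if_true, if_false, hv]
      linarith [hu i]
    · simp [hxu, hxv, hsupp x hxu hxv i]

end TrivialMotions

lemma Generic.injective {d : ℕ} {V : Type*} {p : V → Fin d → ℝ} (hp : Generic d p)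
    (hd : 1 ≤ d) : Injective p := by
  intro u v h
  have hinj : Injective fun vi : V × Fin d => p vi.1 vi.2 := AlgebraicIndependent.injective hp
  let i₀ : Fin d := ⟨0, hd⟩
  exact congrArg Prod.fst (@hinj (u, i₀) (v, i₀) (congrFun h i₀))

section Balanced

variable {d : ℕ} {V : Type*} [Fintype V] [DecidableEq V] {p : V → Fin d → ℝ}
  {D : Finset (Sym2 V)} {k : ℕ}

lemma Monochromatic.apply_eq_zero_of_mem_commonSpan {x : V} (hx : Monochromatic d p D k x)
    {w : V × Fin d → ℝ} (hw : w ∈ commonSpan d p D k) (i : Fin d) : w (x, i) = 0 := by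
  obtain ⟨A, ⟨B, hBD, hB, hAB⟩, hA⟩ := hx
  have hxB : ∀ e ∈ (B : Set (Sym2 V)), x ∉ e := fun e he hxe => by
    have := hA e (hBD he) hxe
    rw [hAB, mem_sdiff] at this
    exact this.2 he
  exact apply_eq_zero_of_mem_rowSpan hxB
    (mem_commonSpan.1 hw B (mem_predFoldCircuits.2 ⟨hBD, hB⟩)) i

lemma setOf_isPrincipalPart :
    {A | IsPrincipalPart d p D k A} = ↑((predFoldCircuits d p D k).image (D \ ·)) := by
  ext A
  simp [IsPrincipalPart, mem_predFoldCircuits, and_assoc, eq_comm]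

lemma ncard_setOf_isPrincipalPart :
    {A | IsPrincipalPart d p D k A}.ncard = #(predFoldCircuits d p D k) := by
  rw [setOf_isPrincipalPart, Set.ncard_coe_finset]
  refine card_image_of_injOn fun B hB B' hB' h => ?_
  rw [← Finset.sdiff_sdiff_eq_self (mem_predFoldCircuits.1 hB).1,
    ← Finset.sdiff_sdiff_eq_self (mem_predFoldCircuits.1 hB').1]
  exact congrArg (D \ ·) h

namespace IsKFoldCircuit

variable (hD : IsKFoldCircuit d p D k) (hk : 1 ≤ k)
include hD hk

lemma commonSpan_le_span_rigRow (hp : Injective p) {u v : V}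
    (hT : {x | ¬ Monochromatic d p D k x} ⊆ {u, v}) :
    commonSpan d p D k ≤ ℝ ∙ rigRow d p s(u, v) := by
  intro w hw
  obtain ⟨B₀, hB₀⟩ := hD.predFoldCircuits_nonempty hk
  have hwB₀ := mem_commonSpan.1 hw B₀ hB₀
  refine mem_span_rigRow_of_forall_apply_eq_zero hp (fun x hxu hxv => ?_)
    (sum_apply_eq_zero_of_mem_rowSpan hwB₀) (sum_mul_sub_mul_eq_zero_of_mem_rowSpan hwB₀)
  have hx : Monochromatic d p D k x := by
    by_contra hx
    simpa [hxu, hxv] using hT hx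
  exact hx.apply_eq_zero_of_mem_commonSpan hw

lemma iInter_rcl_sdiff_isPrincipalPart :
    ⋂ A ∈ {A | IsPrincipalPart d p D k A}, rcl d p ↑(D \ A) =
      {e | ¬ e.IsDiag ∧ rigRow d p e ∈ commonSpan d p D k} := by
  obtain ⟨B₀, hB₀⟩ := hD.predFoldCircuits_nonempty hk
  ext e
  simp only [setOf_isPrincipalPart, coe_image, Set.mem_iInter, Set.mem_image, mem_coe,
    forall_exists_index, and_imp, forall_apply_eq_imp_iff₂, mem_commonSpan, Set.mem_ofPred_eq]
  have hsdiff : ∀ B ∈ predFoldCircuits d p D k, D \ (D \ B) = B :=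
    fun B hB => Finset.sdiff_sdiff_eq_self (mem_predFoldCircuits.1 hB).1
  simp +contextual only [hsdiff, mem_rcl_iff]
  exact ⟨fun h => ⟨(h B₀ hB₀).1, fun B hB => (h B hB).2⟩, fun h B hB => ⟨h.1, h.2 B hB⟩⟩

end IsKFoldCircuit

end Balanced

theorem kfold_circuit_two_technicolour_balanced_general
    (d k : ℕ) (hd : 1 ≤ d) (hk : 1 ≤ k)
    {V : Type*} [Fintype V] [DecidableEq V]
    (D : Finset (Sym2 V))
    (p : V → Fin d → ℝ) (hp : Generic d p)
    (hD : IsKFoldCircuit d p D k)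
    (htech : ({w : V | ¬ Monochromatic d p D k w}).ncard ≤ 2) :
    IsBalanced d p D k := by
  obtain ⟨e, -⟩ := hD.nonempty hk
  have : Nonempty V := ⟨e.out.1⟩
  obtain ⟨u, v, hT⟩ := Set.exists_subset_pair_of_ncard_le_two (Set.toFinite _) htech
  have hW := hD.commonSpan_le_span_rigRow hk (hp.injective hd) hT
  have hlow := hD.le_card_predFoldCircuits hk
  have hup := hD.card_predFoldCircuits_le hk
  rw [IsBalanced, hD.iInter_rcl_sdiff_isPrincipalPart hk, ncard_setOf_isPrincipalPart,
    rrk_eq_finrank_rowSpan, rowSpan_setOf_rigRow_mem hW]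
  rcases eq_or_ne (commonSpan d p D k) ⊥ with hbot | hne
  · rw [hbot, finrank_bot] at hup ⊢
    omega
  · obtain ⟨hmem, hrow⟩ := Submodule.mem_and_ne_zero_of_le_span_singleton hW hne
    have := hD.lt_card_predFoldCircuits hk hrow hmem
    rw [hW.antisymm ((Submodule.span_singleton_le_iff_mem _ _).2 hmem),
      finrank_span_singleton hrow] at hup ⊢
    omega

/-- Theorem 3.12: a `k`-fold `R_d`-circuit with at most two technicolour vertices
is balanced. -/
theorem kfold_circuit_two_technicolour_balanced
    (d k : ℕ) (hd : 1 ≤ d) (hk : 1 ≤ k)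
    {V : Type*} [Fintype V] [DecidableEq V]
    (D : Finset (Sym2 V)) (hsimple : ∀ e ∈ D, ¬ e.IsDiag)
    (hcov : ∀ w : V, ∃ e ∈ D, w ∈ e)
    (p : V → Fin d → ℝ) (hp : Generic d p)
    (hD : IsKFoldCircuit d p D k)
    (htech : ({w : V | ¬ Monochromatic d p D k w}).ncard ≤ 2) :
    IsBalanced d p D k :=
  kfold_circuit_two_technicolour_balanced_general d k hd hk D p hp hD htech
end

section
/- Let d ≥ 1, let H = (V,E) be an R_d-independent graph, and let G = (V, E ∪ F) where F is a set of at most two edges of the complete graph on V not in E. Then G is R_{d+1}-independent. -/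
open scoped BigOperators

/-!
Extend a realisation `p` of `H` in `ℝ^d` by a last coordinate `h : V → ℝ`. A linear dependence
`ω` among the rows of `E ∪ F` at the extended realisation is a dependence at `p`, and these form
a space of dimension at most `|F| ≤ 2` because `E` is independent at `p`; in the last coordinate
it says that the stress matrix `∑ ω_uv (χ_u - χ_v)(χ_u - χ_v)ᵀ` kills `h`. Stress matrices are
symmetric and determine `ω`, and two linearly independent symmetric matrices `A`, `B` send some
vector `h` to linearly independent vectors `A h`, `B h`. So for a suitable `h` there is no
dependence at all. Independence at one realisation persists at a generic one, since it is
witnessed by a Gram determinant, a polynomial with rational coefficients in the coordinates.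
-/

open Matrix

theorem exists_smul_eq_of_not_linearIndependent_pair {K N : Type*} [Field K] [AddCommGroup N]
    [Module K N] {x y : N} (hx : x ≠ 0) (h : ¬LinearIndependent K ![x, y]) :
    ∃ a : K, a • x = y := by
  simpa [LinearIndependent.pair_iff' hx] using h

namespace LinearMap

variable {K M N : Type*} [Field K] [AddCommGroup M] [Module K M] [AddCommGroup N] [Module K N]
  {f g : M →ₗ[K] N}

theorem apply_eq_smul_of_linearIndependent_pair (hfg : ∀ x, ¬LinearIndependent K ![f x, g x])
    {x y : M} (hxy : LinearIndependent K ![f x, f y]) {c : K} (hx : g x = c • f x) :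
    g y = c • f y := by
  obtain ⟨a, ha⟩ :=
    exists_smul_eq_of_not_linearIndependent_pair (by simpa using hxy.ne_zero 1) (hfg y)
  have hxy' : f (x + y) ≠ 0 := by
    rw [map_add]
    exact fun h0 => one_ne_zero (LinearIndependent.pair_iff.1 hxy 1 1 (by simpa using h0)).1
  obtain ⟨b, hb⟩ := exists_smul_eq_of_not_linearIndependent_pair hxy' (hfg (x + y))
  have hsum : (b - c) • f x + (b - a) • f y = 0 := by
    rw [map_add, map_add, hx, ← ha] at hb
    linear_combination (norm := module) hb
  obtain ⟨hbc, hba⟩ := LinearIndependent.pair_iff.1 hxy _ _ hsum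
  rw [← ha, ← sub_eq_zero.1 hba, sub_eq_zero.1 hbc]

theorem exists_eq_smul_of_forall_not_linearIndependent
    (hfg : ∀ x, ¬LinearIndependent K ![f x, g x]) {x y : M}
    (hxy : LinearIndependent K ![f x, f y]) : ∃ c : K, g = c • f := by
  have hfx : f x ≠ 0 := by simpa using hxy.ne_zero 0
  obtain ⟨c, hc⟩ := exists_smul_eq_of_not_linearIndependent_pair hfx (hfg x)
  have hy := apply_eq_smul_of_linearIndependent_pair hfg hxy hc.symm
  refine ⟨c, LinearMap.ext fun z => ?_⟩
  by_cases hxz : LinearIndependent K ![f x, f z]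
  · exact apply_eq_smul_of_linearIndependent_pair hfg hxz hc.symm
  obtain ⟨b, hb⟩ := exists_smul_eq_of_not_linearIndependent_pair hfx hxz
  -- `f z` lies on the line through `f x` and `f y` does not, so `f (y + z)` does not either
  have hxyz : LinearIndependent K ![f x, f (y + z)] := by
    refine (LinearIndependent.pair_iff' hfx).2 fun a ha => ?_
    refine (LinearIndependent.pair_iff' hfx).1 hxy (a - b) ?_
    rw [map_add, ← hb] at ha
    rw [sub_smul, ha, add_sub_cancel_right]
  have hyz := apply_eq_smul_of_linearIndependent_pair hfg hxyz hc.symm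
  rw [map_add, map_add, hy, smul_add] at hyz
  simpa using hyz

end LinearMap

namespace Matrix

theorem IsSymm.mulVec_dotProduct {R n : Type*} [CommSemiring R] [Fintype n] {A : Matrix n n R}
    (hA : A.IsSymm) (x y : n → R) : A *ᵥ x ⬝ᵥ y = x ⬝ᵥ A *ᵥ y := by
  rw [dotProduct_mulVec, ← mulVec_transpose, hA.eq, dotProduct_comm]

theorem IsSymm.eq_zero_of_forall_mulVec_eq_smul {K n : Type*} [Field K] [Fintype n]
    {C : Matrix n n K} (hC : C.IsSymm) {a x₀ : n → K} (hCa : ∀ x, ∃ t : K, C *ᵥ x = t • a)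
    (hx₀ : C *ᵥ x₀ = 0) (ha : a ⬝ᵥ x₀ ≠ 0) : C = 0 := by
  refine ext_iff_mulVec.2 fun x => ?_
  obtain ⟨t, ht⟩ := hCa x
  have h := hC.mulVec_dotProduct x x₀
  rw [hx₀, dotProduct_zero, ht, smul_dotProduct, smul_eq_mul] at h
  rw [ht, (mul_eq_zero.1 h).resolve_right ha, zero_smul, zero_mulVec]

variable {K n : Type*} [Field K] [LinearOrder K] [IsStrictOrderedRing K] [Fintype n]
  {A B : Matrix n n K}

theorem IsSymm.mulVec_dotProduct_ne_zero (hA : A.IsSymm) {x₀ : n → K} (hx₀ : A *ᵥ x₀ ≠ 0)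
    (hA₁ : ∀ x, ∃ t : K, A *ᵥ x = t • A *ᵥ x₀) : A *ᵥ x₀ ⬝ᵥ x₀ ≠ 0 := by
  obtain ⟨s, hs⟩ := hA₁ (A *ᵥ x₀)
  have h := hA.mulVec_dotProduct (A *ᵥ x₀) x₀
  rw [hs, smul_dotProduct] at h
  intro h0
  rw [h0, smul_zero] at h
  exact hx₀ (dotProduct_self_eq_zero.1 h.symm)

/-- The rank-one case of `IsSymm.exists_linearIndependent_mulVec`: the image of `B` also lies on
the image line of `A`, and symmetry then forces `B = c • A`. -/
theorem IsSymm.exists_smul_eq_of_forall_mulVec_eq_smul (hA : A.IsSymm) (hB : B.IsSymm)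
    (hAB : ∀ x, ¬LinearIndependent K ![A *ᵥ x, B *ᵥ x]) {x₀ : n → K} (hx₀ : A *ᵥ x₀ ≠ 0)
    (hA₁ : ∀ x, ∃ t : K, A *ᵥ x = t • A *ᵥ x₀) : ∃ c : K, c • A = B := by
  set a := A *ᵥ x₀
  obtain ⟨c, hc⟩ := exists_smul_eq_of_not_linearIndependent_pair hx₀ (hAB x₀)
  have hB₁ : ∀ x, ∃ t : K, B *ᵥ x = t • a := by
    intro x
    by_cases hx : A *ᵥ x = 0
    · have hxx₀ : A *ᵥ (x + x₀) = a := by rw [mulVec_add, hx, zero_add]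
      obtain ⟨t, ht⟩ :=
        exists_smul_eq_of_not_linearIndependent_pair (hxx₀ ▸ hx₀) (hAB (x + x₀))
      refine ⟨t - c, ?_⟩
      rw [hxx₀, mulVec_add, ← hc] at ht
      rw [sub_smul, ht, add_sub_cancel_right]
    · obtain ⟨s, hs⟩ := exists_smul_eq_of_not_linearIndependent_pair hx (hAB x)
      obtain ⟨t, ht⟩ := hA₁ x
      exact ⟨s * t, by rw [← hs, ht, smul_smul]⟩
  refine ⟨c, (sub_eq_zero.1 ((hB.sub (hA.smul c)).eq_zero_of_forall_mulVec_eq_smul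
    (fun x => ?_) ?_ (hA.mulVec_dotProduct_ne_zero hx₀ hA₁))).symm⟩
  · obtain ⟨s, hs⟩ := hB₁ x
    obtain ⟨t, ht⟩ := hA₁ x
    exact ⟨s - c * t, by rw [sub_mulVec, smul_mulVec, hs, ht, smul_smul, sub_smul]⟩
  · rw [sub_mulVec, smul_mulVec, hc, sub_self]

/-- This fails without symmetry: take `A = E₁₁` and `B = E₁₂`. -/
theorem IsSymm.exists_linearIndependent_mulVec (hA : A.IsSymm) (hB : B.IsSymm)
    (hAB : LinearIndependent K ![A, B]) : ∃ x, LinearIndependent K ![A *ᵥ x, B *ᵥ x] := by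
  by_contra! hdep
  have hA0 : A ≠ 0 := by simpa using hAB.ne_zero 0
  suffices ∃ c : K, c • A = B from
    let ⟨c, hc⟩ := this; (LinearIndependent.pair_iff' hA0).1 hAB c hc
  by_cases hrank : ∃ x y, LinearIndependent K ![A *ᵥ x, A *ᵥ y]
  · obtain ⟨x, y, hxy⟩ := hrank
    obtain ⟨c, hc⟩ := LinearMap.exists_eq_smul_of_forall_not_linearIndependent
      (f := A.mulVecLin) (g := B.mulVecLin) hdep hxy
    exact ⟨c, ext_iff_mulVec.2 fun x => by
      simpa [smul_mulVec] using (LinearMap.congr_fun hc x).symm⟩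
  push Not at hrank
  obtain ⟨x₀, hx₀⟩ : ∃ x₀, A *ᵥ x₀ ≠ 0 := by
    by_contra! h
    exact hA0 (ext_iff_mulVec.2 fun x => by rw [h, zero_mulVec])
  exact hA.exists_smul_eq_of_forall_mulVec_eq_smul hB hdep hx₀ fun x =>
    (exists_smul_eq_of_not_linearIndependent_pair hx₀ (hrank x₀ x)).imp fun _ => Eq.symm

theorem exists_mulVec_ne_zero_of_finrank_le_two {W : Submodule K (Matrix n n K)}
    (hW : Module.finrank K W ≤ 2) (hsymm : ∀ A ∈ W, A.IsSymm) :
    ∃ x, ∀ A ∈ W, A ≠ 0 → A *ᵥ x ≠ 0 := by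
  rcases (by omega : Module.finrank K W ≤ 1 ∨ Module.finrank K W = 2) with hW | hW
  · obtain ⟨D, hD⟩ := finrank_le_one_iff.1 hW
    have hW_D : ∀ A ∈ W, ∃ c : K, A = c • (D : Matrix n n K) := fun A hA =>
      (hD ⟨A, hA⟩).imp fun c hc => by rw [← Submodule.coe_smul, hc]
    by_cases hD0 : (D : Matrix n n K) = 0
    · refine ⟨0, fun A hA hA0 => absurd ?_ hA0⟩
      obtain ⟨c, rfl⟩ := hW_D A hA
      rw [hD0, smul_zero]
    obtain ⟨x, hx⟩ : ∃ x, (D : Matrix n n K) *ᵥ x ≠ 0 := by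
      by_contra! h
      exact hD0 (ext_iff_mulVec.2 fun x => by rw [h, zero_mulVec])
    refine ⟨x, fun A hA hA0 => ?_⟩
    obtain ⟨c, rfl⟩ := hW_D A hA
    rw [smul_mulVec]
    exact smul_ne_zero (left_ne_zero_of_smul hA0) hx
  · let b := Module.finBasisOfFinrankEq K W hW
    have hli : LinearIndependent K ![(b 0 : Matrix n n K), b 1] := by
      refine LinearIndependent.pair_iff.2 fun s t hst => ?_
      have := Fintype.linearIndependent_iff.1 b.linearIndependent ![s, t]
        (Subtype.ext (by simpa [Fin.sum_univ_two] using hst))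
      exact ⟨this 0, this 1⟩
    obtain ⟨x, hx⟩ := (hsymm _ (b 0).2).exists_linearIndependent_mulVec (hsymm _ (b 1).2) hli
    refine ⟨x, fun A hA hA0 hAx => hA0 ?_⟩
    have hA' : A = b.repr ⟨A, hA⟩ 0 • (b 0 : Matrix n n K) +
        b.repr ⟨A, hA⟩ 1 • (b 1 : Matrix n n K) := by
      simpa only [Fin.sum_univ_two, Submodule.coe_add, Submodule.coe_smul] using
        (congrArg Subtype.val (b.sum_repr ⟨A, hA⟩)).symm
    rw [hA', add_mulVec, smul_mulVec, smul_mulVec] at hAx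
    obtain ⟨h0, h1⟩ := LinearIndependent.pair_iff.1 hx _ _ hAx
    rw [hA', h0, h1, zero_smul, zero_smul, add_zero]

theorem linearIndependent_row_iff_det_mul_transpose_ne_zero {m p : Type*} [Fintype m]
    [Fintype p] [DecidableEq m] (M : Matrix m p K) :
    LinearIndependent K M.row ↔ (M * Mᵀ).det ≠ 0 := by
  rw [linearIndependent_iff_card_eq_finrank_span, Set.finrank, ← rank_eq_finrank_span_row,
    ← rank_self_mul_transpose, rank_eq_finrank_span_row, ← Set.finrank,
    ← linearIndependent_iff_card_eq_finrank_span, linearIndependent_rows_iff_isUnit,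
    isUnit_iff_isUnit_det, isUnit_iff_ne_zero]

end Matrix

theorem AlgebraicIndependent.linearIndependent_row_map_aeval {R K σ ι κ : Type*} [CommRing R]
    [Field K] [LinearOrder K] [IsStrictOrderedRing K] [Algebra R K] [Fintype ι] [Fintype κ]
    [DecidableEq ι] {x : σ → K} (hx : AlgebraicIndependent R x)
    (P : Matrix ι κ (MvPolynomial σ R)) {x₀ : σ → K}
    (h₀ : LinearIndependent K (P.map (MvPolynomial.aeval x₀)).row) :
    LinearIndependent K (P.map (MvPolynomial.aeval x)).row := by
  have aeval_gram : ∀ y : σ → K, MvPolynomial.aeval y (P * Pᵀ).det =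
      (P.map (MvPolynomial.aeval y) * (P.map (MvPolynomial.aeval y))ᵀ).det := fun y => by
    rw [AlgHom.map_det, AlgHom.mapMatrix_apply, Matrix.map_mul, transpose_map]
  rw [linearIndependent_row_iff_det_mul_transpose_ne_zero, ← aeval_gram] at h₀ ⊢
  intro h
  exact h₀ (by rw [hx.eq_zero_of_aeval_eq_zero _ h, map_zero])

theorem finrank_ker_linearCombination_add_card_le {K M α : Type*} [Field K] [AddCommGroup M]
    [Module K M] (v : α → M) {E s : Finset α} (hEs : E ⊆ s)
    (hE : LinearIndependent K fun e : E => v e) :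
    Module.finrank K (LinearMap.ker (Fintype.linearCombination K fun e : s => v e)) + E.card ≤
      s.card := by
  have hrank := LinearMap.finrank_range_add_finrank_ker
    (Fintype.linearCombination K fun e : s => v e)
  rw [Fintype.range_linearCombination, Module.finrank_fintype_fun_eq_card,
    Fintype.card_coe] at hrank
  have hE' : E.card ≤ Module.finrank K (Submodule.span K (Set.range fun e : s => v e)) := by
    rw [← Fintype.card_coe E, ← finrank_span_eq_card hE]
    have := FiniteDimensional.span_of_finite K (Set.finite_range fun e : s => v e)
    exact Submodule.finrank_mono (Submodule.span_mono (by
      rintro _ ⟨e, rfl⟩; exact ⟨⟨e, hEs e.2⟩, rfl⟩))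
  omega

section Rigidity

variable {V : Type*} [DecidableEq V] {d : ℕ}

theorem rrk_eq_card_iff [Fintype V] {p : V → Fin d → ℝ} {s : Finset (Sym2 V)} :
    rrk d p ↑s = s.card ↔ LinearIndependent ℝ fun e : s => rigRow d p e := by
  rw [linearIndependent_iff_card_eq_finrank_span, Fintype.card_coe, rrk, Set.finrank,
    Set.image_eq_range]
  exact eq_comm

/-- `rigRow` with the coordinates of the realisation replaced by indeterminates. -/
noncomputable def rigRowPoly (d : ℕ) (e : Sym2 V) (wi : V × Fin d) :
    MvPolynomial (V × Fin d) ℚ :=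
  Sym2.lift ⟨fun u v => ((if wi.1 = u then 1 else 0) - (if wi.1 = v then 1 else 0)) *
    (MvPolynomial.X (u, wi.2) - MvPolynomial.X (v, wi.2)), fun u v => by ring⟩ e

theorem aeval_rigRowPoly (p : V → Fin d → ℝ) (e : Sym2 V) (wi : V × Fin d) :
    MvPolynomial.aeval (fun vi : V × Fin d => p vi.1 vi.2) (rigRowPoly d e wi) =
      rigRow d p e wi := by
  induction e using Sym2.ind with
  | _ u v => simp [rigRowPoly, rigRow, apply_ite (MvPolynomial.aeval _)]

theorem Generic.linearIndependent_rigRow [Fintype V] {q : V → Fin d → ℝ} (hq : Generic d q)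
    {s : Finset (Sym2 V)} {q₀ : V → Fin d → ℝ}
    (h₀ : LinearIndependent ℝ fun e : s => rigRow d q₀ e) :
    LinearIndependent ℝ fun e : s => rigRow d q e := by
  have rows : ∀ r : V → Fin d → ℝ,
      ((Matrix.of fun (e : s) wi => rigRowPoly d (e : Sym2 V) wi).map
        (MvPolynomial.aeval fun vi : V × Fin d => r vi.1 vi.2)).row = fun e : s => rigRow d r e :=
    fun r => by ext e wi; exact aeval_rigRowPoly r e wi
  rw [← rows] at h₀ ⊢
  exact hq.linearIndependent_row_map_aeval _ h₀

noncomputable def edgeLaplacian (e : Sym2 V) : Matrix V V ℝ :=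
  Sym2.lift ⟨fun u v => vecMulVec (Pi.single u 1 - Pi.single v 1) (Pi.single u 1 - Pi.single v 1),
    fun u v => by
      dsimp only
      rw [← neg_sub (Pi.single u 1), neg_vecMulVec, vecMulVec_neg, neg_neg]⟩ e

theorem isSymm_edgeLaplacian (e : Sym2 V) : (edgeLaplacian e).IsSymm := by
  induction e using Sym2.ind with
  | _ u v => exact transpose_vecMulVec _ _

theorem edgeLaplacian_apply_of_ne {u v : V} (huv : u ≠ v) (e : Sym2 V) :
    edgeLaplacian e u v = if e = s(u, v) then -1 else 0 := by
  induction e using Sym2.ind with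
  | _ a b =>
    simp only [edgeLaplacian, Sym2.lift_mk, vecMulVec_apply, Pi.sub_apply, Pi.single_apply,
      Sym2.eq_iff]
    grind

noncomputable def stressMatrix (s : Finset (Sym2 V)) : (s → ℝ) →ₗ[ℝ] Matrix V V ℝ :=
  Fintype.linearCombination ℝ fun e : s => edgeLaplacian e

variable {s : Finset (Sym2 V)}

theorem stressMatrix_apply (ω : s → ℝ) :
    stressMatrix s ω = ∑ e, ω e • edgeLaplacian (e : Sym2 V) :=
  Fintype.linearCombination_apply _ _ _

theorem isSymm_stressMatrix (ω : s → ℝ) : (stressMatrix s ω).IsSymm := by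
  simp only [IsSymm, stressMatrix_apply, transpose_sum, transpose_smul,
    (isSymm_edgeLaplacian _).eq]

theorem stressMatrix_injective (hs : ∀ e ∈ s, ¬e.IsDiag) :
    Function.Injective (stressMatrix s) := by
  refine (injective_iff_map_eq_zero _).2 fun ω hω => funext fun ⟨e, he⟩ => ?_
  induction e using Sym2.ind with
  | _ u v =>
    have huv : u ≠ v := by simpa using hs _ he
    have h_entry := congrFun (congrFun hω u) v
    simp only [stressMatrix_apply, Matrix.sum_apply, Matrix.smul_apply, smul_eq_mul,
      edgeLaplacian_apply_of_ne huv, Matrix.zero_apply] at h_entry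
    rw [Finset.sum_eq_single ⟨s(u, v), he⟩
      (fun f _ hf => by rw [if_neg fun h => hf (Subtype.ext h), mul_zero]) (by simp),
      if_pos rfl] at h_entry
    simpa using h_entry

def snocCoord (p : V → Fin d → ℝ) (h : V → ℝ) : V → Fin (d + 1) → ℝ :=
  fun v => Fin.snoc (p v) (h v)

theorem rigRow_snocCoord_castSucc (p : V → Fin d → ℝ) (h : V → ℝ) (e : Sym2 V) (w : V)
    (j : Fin d) : rigRow (d + 1) (snocCoord p h) e (w, j.castSucc) = rigRow d p e (w, j) := by
  induction e using Sym2.ind with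
  | _ u v => simp [rigRow, snocCoord]

theorem rigRow_snocCoord_last [Fintype V] (p : V → Fin d → ℝ) (h : V → ℝ) (e : Sym2 V)
    (w : V) : rigRow (d + 1) (snocCoord p h) e (w, Fin.last d) = (edgeLaplacian e *ᵥ h) w := by
  induction e using Sym2.ind with
  | _ u v =>
    simp [rigRow, snocCoord, edgeLaplacian, vecMulVec_mulVec, sub_dotProduct, Pi.single_apply]

theorem sum_smul_rigRow_snocCoord_eq_zero_iff [Fintype V] (p : V → Fin d → ℝ) (h : V → ℝ)
    (ω : s → ℝ) :
    ∑ e, ω e • rigRow (d + 1) (snocCoord p h) e = 0 ↔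
      ∑ e, ω e • rigRow d p e = 0 ∧ stressMatrix s ω *ᵥ h = 0 := by
  simp only [funext_iff, Prod.forall, Fin.forall_fin_succ', Finset.sum_apply, Pi.smul_apply,
    Pi.zero_apply, rigRow_snocCoord_castSucc, rigRow_snocCoord_last, stressMatrix_apply,
    sum_mulVec, smul_mulVec, forall_and]

theorem exists_linearIndependent_rigRow_snocCoord [Fintype V] (p : V → Fin d → ℝ)
    (hs : ∀ e ∈ s, ¬e.IsDiag)
    (hker : Module.finrank ℝ
      (LinearMap.ker (Fintype.linearCombination ℝ fun e : s => rigRow d p e)) ≤ 2) :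
    ∃ h : V → ℝ, LinearIndependent ℝ fun e : s => rigRow (d + 1) (snocCoord p h) e := by
  obtain ⟨h, hh⟩ := Matrix.exists_mulVec_ne_zero_of_finrank_le_two
    ((Submodule.finrank_map_le _ _).trans hker)
    (by rintro _ ⟨ω, -, rfl⟩; exact isSymm_stressMatrix ω)
  refine ⟨h, Fintype.linearIndependent_iff.2 fun ω hω => ?_⟩
  obtain ⟨hω_p, hω_h⟩ := (sum_smul_rigRow_snocCoord_eq_zero_iff p h ω).1 hω
  have hω0 : stressMatrix s ω = 0 := by
    by_contra h0
    exact hh _ ⟨ω, by simpa [Fintype.linearCombination_apply] using hω_p, rfl⟩ h0 hω_h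
  exact congrFun (stressMatrix_injective hs (hω0.trans (map_zero _).symm))

end Rigidity

theorem add_two_edges_independent_general
    (d : ℕ)
    {V : Type*} [Fintype V] [DecidableEq V]
    (E F : Finset (Sym2 V))
    (hEsimple : ∀ e ∈ E, ¬ e.IsDiag) (hFsimple : ∀ e ∈ F, ¬ e.IsDiag)
    (hdisj : Disjoint E F) (hFcard : F.card ≤ 2)
    (p : V → Fin d → ℝ)
    (hind : rrk d p ↑E = E.card)
    (q : V → Fin (d+1) → ℝ) (hq : Generic (d+1) q) :
    rrk (d+1) q ↑(E ∪ F) = (E ∪ F).card := by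
  have hker := finrank_ker_linearCombination_add_card_le (rigRow d p)
    (Finset.subset_union_left (s₂ := F)) (rrk_eq_card_iff.1 hind)
  rw [Finset.card_union_of_disjoint hdisj] at hker
  obtain ⟨h, hli⟩ := exists_linearIndependent_rigRow_snocCoord (s := E ∪ F) p
    (fun e he => (Finset.mem_union.1 he).elim (hEsimple e) (hFsimple e)) (by omega)
  exact rrk_eq_card_iff.2 (hq.linearIndependent_rigRow hli)

/-- Corollary 4.11: adding at most two edges to an `R_d`-independent graph yields
an `R_{d+1}`-independent graph. -/
theorem add_two_edges_independent
    (d : ℕ) (hd : 1 ≤ d)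
    {V : Type*} [Fintype V] [DecidableEq V]
    (E F : Finset (Sym2 V))
    (hEsimple : ∀ e ∈ E, ¬ e.IsDiag) (hFsimple : ∀ e ∈ F, ¬ e.IsDiag)
    (hdisj : Disjoint E F) (hFcard : F.card ≤ 2)
    (p : V → Fin d → ℝ) (hp : Generic d p)
    (hind : rrk d p ↑E = E.card)
    (q : V → Fin (d+1) → ℝ) (hq : Generic (d+1) q) :
    rrk (d+1) q ↑(E ∪ F) = (E ∪ F).card :=
  add_two_edges_independent_general d E F hEsimple hFsimple hdisj hFcard p hind q hq
end
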